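/- arXiv:2510.27368 — 5 statements merged into one kernel-verified Lean document; each statement's English description precedes it below -/
import Mathlib

section
/- The function D_f on the probability simplex is nonnegative and nondegenerate: for all P, Q ∈ Δ_N one has D_f(P,Q) ≥ 0, and D_f(P,Q) = 0 if and only if P = Q. -/
/-- Membership in the probability simplex Δ_N ⊂ ℝ^{N+1}. -/
def memSimplex {N : ℕ} (P : Fin (N + 1) → ℝ) : Prop :=
  (∀ i, P i ∈ Set.Icc (0 : ℝ) 1) ∧ ∑ i, P i = 1

/-- The max-type quasimetric D_f(P,Q) = max_i (f(q_i) - f(p_i)). -/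
noncomputable def Df {N : ℕ} (f : ℝ → ℝ) (P Q : Fin (N + 1) → ℝ) : ℝ :=
  ⨆ i, (f (Q i) - f (P i))

/-! Two points of the simplex have the same coordinate sum, so some coordinate of `Q` is at
least the corresponding one of `P`, which makes one term of the maximum nonnegative. If the
maximum is `≤ 0`, strict monotonicity gives `Q ≤ P` coordinatewise, and equal sums force `P = Q`. -/

section Df

variable {N : ℕ} {f : ℝ → ℝ} {P Q : Fin (N + 1) → ℝ}

theorem le_Df (i : Fin (N + 1)) : f (Q i) - f (P i) ≤ Df f P Q :=
  le_ciSup (f := fun i => f (Q i) - f (P i)) (Set.finite_range _).bddAbove i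

theorem Df_le_iff {c : ℝ} : Df f P Q ≤ c ↔ ∀ i, f (Q i) - f (P i) ≤ c :=
  ciSup_le_iff (f := fun i => f (Q i) - f (P i)) (Set.finite_range _).bddAbove

theorem Df_self (f : ℝ → ℝ) (P : Fin (N + 1) → ℝ) : Df f P P = 0 := by
  simp [Df]

theorem memSimplex.exists_le (hP : memSimplex P) (hQ : memSimplex Q) : ∃ i, P i ≤ Q i := by
  obtain ⟨i, -, hi⟩ :=
    Finset.exists_le_of_sum_le Finset.univ_nonempty (hP.2.trans hQ.2.symm).le
  exact ⟨i, hi⟩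

theorem memSimplex.eq_of_forall_le (hP : memSimplex P) (hQ : memSimplex Q)
    (hle : ∀ i, Q i ≤ P i) : P = Q := by
  have hsum : ∑ i, Q i = ∑ i, P i := hQ.2.trans hP.2.symm
  funext i
  exact ((Finset.sum_eq_sum_iff_of_le fun j _ => hle j).mp hsum i (Finset.mem_univ i)).symm

theorem Df_nonneg (hf : MonotoneOn f (Set.Icc 0 1)) (hP : memSimplex P) (hQ : memSimplex Q) :
    0 ≤ Df f P Q := by
  obtain ⟨i, hi⟩ := hP.exists_le hQ
  have hfi : f (P i) ≤ f (Q i) := hf (hP.1 i) (hQ.1 i) hi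
  exact (sub_nonneg.mpr hfi).trans (le_Df i)

theorem eq_of_Df_nonpos (hf : StrictMonoOn f (Set.Icc 0 1)) (hP : memSimplex P)
    (hQ : memSimplex Q) (hD : Df f P Q ≤ 0) : P = Q :=
  hP.eq_of_forall_le hQ fun i =>
    (hf.le_iff_le (hQ.1 i) (hP.1 i)).mp (sub_nonpos.mp (Df_le_iff.mp hD i))

end Df

theorem stmt_0_general {N : ℕ} (f : ℝ → ℝ)
    (hfm : StrictMonoOn f (Set.Icc 0 1))
    (P Q : Fin (N + 1) → ℝ) (hP : memSimplex P) (hQ : memSimplex Q) :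
    0 ≤ Df f P Q ∧ (Df f P Q = 0 ↔ P = Q) := by
  refine ⟨Df_nonneg hfm.monotoneOn hP hQ, fun hD => eq_of_Df_nonpos hfm hP hQ hD.le, ?_⟩
  rintro rfl
  exact Df_self f P

/-- D_f is nonnegative and nondegenerate on Δ_N. -/
theorem stmt_0 {N : ℕ} (f : ℝ → ℝ)
    (hfc : ContinuousOn f (Set.Icc 0 1))
    (hfm : StrictMonoOn f (Set.Icc 0 1))
    (hf0 : f 0 = 0) (hf1 : f 1 = 1)
    (P Q : Fin (N + 1) → ℝ) (hP : memSimplex P) (hQ : memSimplex Q) :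
    0 ≤ Df f P Q ∧ (Df f P Q = 0 ↔ P = Q) :=
  stmt_0_general f hfm P Q hP hQ
end

section
/- The quasimetric space (Δ_N, D_f) is both forward and backward complete: (a) if a sequence (P_n) in Δ_N is forward Cauchy, i.e. for every ε > 0 there exists N₀ such that D_f(P_n, P_m) < ε whenever N₀ ≤ n ≤ m, then there exists P ∈ Δ_N with D_f(P, P_n) → 0; (b) if (P_n) is backward Cauchy, i.e. for every ε > 0 there exists N₀ such that D_f(P_m, P_n) < ε whenever N₀ ≤ n ≤ m, then there exists P ∈ Δ_N with D_f(P_n, P) → 0. -/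
open Filter Topology

theorem isCompact_setOf_memSimplex (N : ℕ) :
    IsCompact {P : Fin (N + 1) → ℝ | memSimplex P} := by
  have hset : {P : Fin (N + 1) → ℝ | memSimplex P} =
      Set.univ.pi (fun _ => Set.Icc 0 1) ∩ {P | ∑ i, P i = 1} := by
    ext P; simp only [memSimplex, Set.mem_ofPred_eq, Set.mem_inter_iff, Set.mem_univ_pi]
  rw [hset]
  exact (isCompact_univ_pi fun _ => isCompact_Icc).inter_right <|
    isClosed_eq (continuous_finsetSum _ fun i _ => continuous_apply i) continuous_const

theorem Filter.Tendsto.ciSup_nhds {ι α L : Type*} [Fintype ι] [Nonempty ι]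
    [ConditionallyCompleteLattice L] [TopologicalSpace L] [ContinuousSup L]
    {l : Filter α} {g : ι → α → L} {c : ι → L} (hg : ∀ i, Tendsto (g i) l (𝓝 (c i))) :
    Tendsto (fun a => ⨆ i, g i a) l (𝓝 (⨆ i, c i)) := by
  simpa only [← Finset.sup'_univ_eq_ciSup] using
    Tendsto.finset_sup'_nhds_apply Finset.univ_nonempty fun i _ => hg i

theorem sub_le_Df {N : ℕ} (f : ℝ → ℝ) (P Q : Fin (N + 1) → ℝ) (i : Fin (N + 1)) :
    f (Q i) - f (P i) ≤ Df f P Q :=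
  le_ciSup (f := fun j => f (Q j) - f (P j)) (Set.finite_range _).bddAbove i

theorem tendsto_Df_zero_of_tendsto_apply {N : ℕ} {f : ℝ → ℝ} {P : Fin (N + 1) → ℝ}
    {Q : ℕ → Fin (N + 1) → ℝ}
    (hQ : ∀ i, Tendsto (fun n => f (Q n i)) atTop (𝓝 (f (P i)))) :
    Tendsto (fun n => Df f P (Q n)) atTop (𝓝 0) ∧
      Tendsto (fun n => Df f (Q n) P) atTop (𝓝 0) := by
  unfold Df
  constructor
  · simpa using Tendsto.ciSup_nhds fun i => (hQ i).sub_const (f (P i))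
  · simpa using Tendsto.ciSup_nhds fun i => (hQ i).const_sub (f (P i))

theorem tendsto_of_forall_sub_lt_of_tendsto_subseq {u : ℕ → ℝ}
    (hu : ∀ ε > (0 : ℝ), ∃ N₀ : ℕ, ∀ n m : ℕ, N₀ ≤ n → n ≤ m → u m - u n < ε)
    {φ : ℕ → ℕ} (hφ : StrictMono φ) {c : ℝ} (hc : Tendsto (u ∘ φ) atTop (𝓝 c)) :
    Tendsto u atTop (𝓝 c) := by
  refine Metric.tendsto_atTop.2 fun ε hε => ?_
  obtain ⟨N₀, hN₀⟩ := hu (ε / 2) (half_pos hε)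
  obtain ⟨K, hK⟩ := Metric.tendsto_atTop.1 hc (ε / 2) (half_pos hε)
  have hnear : ∀ k ≥ K, |u (φ k) - c| < ε / 2 := fun k hk => hK k hk
  refine ⟨φ (max K N₀), fun n hn => abs_lt.2 ⟨?_, ?_⟩⟩
  -- `u n` is bounded below via a later term of the subsequence, above via an earlier one.
  · have hk := hnear (max K n) (le_max_left _ _)
    have := hN₀ n (φ (max K n)) ((le_max_right K N₀).trans (hφ.id_le _) |>.trans hn)
      ((le_max_right K n).trans (hφ.id_le _))
    linarith [(abs_lt.1 hk).1]
  · have hk := hnear (max K N₀) (le_max_left _ _)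
    have := hN₀ _ n ((le_max_right K N₀).trans (hφ.id_le _)) hn
    linarith [(abs_lt.1 hk).2]

theorem stmt_4_general {N : ℕ} (f : ℝ → ℝ)
    (hfc : ContinuousOn f (Set.Icc 0 1))
    (Pn : ℕ → Fin (N + 1) → ℝ) (hPn : ∀ n, memSimplex (Pn n)) :
    ((∀ ε > (0 : ℝ), ∃ N₀ : ℕ, ∀ n m : ℕ, N₀ ≤ n → n ≤ m → Df f (Pn n) (Pn m) < ε) →
      ∃ P : Fin (N + 1) → ℝ, memSimplex P ∧
        Tendsto (fun n => Df f P (Pn n)) atTop (𝓝 0)) ∧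
    ((∀ ε > (0 : ℝ), ∃ N₀ : ℕ, ∀ n m : ℕ, N₀ ≤ n → n ≤ m → Df f (Pn m) (Pn n) < ε) →
      ∃ P : Fin (N + 1) → ℝ, memSimplex P ∧
        Tendsto (fun n => Df f (Pn n) P) atTop (𝓝 0)) := by
  obtain ⟨P, hP, φ, hφ, hPφ⟩ := (isCompact_setOf_memSimplex N).tendsto_subseq hPn
  have hsub : ∀ i, Tendsto (fun k => f (Pn (φ k) i)) atTop (𝓝 (f (P i))) := fun i =>
    (hfc _ (hP.1 i)).tendsto.comp <| tendsto_nhdsWithin_iff.2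
      ⟨(continuous_apply i).tendsto P |>.comp hPφ, .of_forall fun k => (hPn (φ k)).1 i⟩
  refine ⟨fun hC => ⟨P, hP, (tendsto_Df_zero_of_tendsto_apply fun i => ?_).1⟩,
    fun hC => ⟨P, hP, (tendsto_Df_zero_of_tendsto_apply fun i => ?_).2⟩⟩
  · refine tendsto_of_forall_sub_lt_of_tendsto_subseq (fun ε hε => ?_) hφ (hsub i)
    obtain ⟨N₀, hN₀⟩ := hC ε hε
    exact ⟨N₀, fun n m hn hnm => (sub_le_Df f _ _ i).trans_lt (hN₀ n m hn hnm)⟩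
  · have := tendsto_of_forall_sub_lt_of_tendsto_subseq (u := fun n => -f (Pn n i))
      (fun ε hε => ?_) hφ (hsub i).neg
    · simpa using this.neg
    obtain ⟨N₀, hN₀⟩ := hC ε hε
    exact ⟨N₀, fun n m hn hnm => by
      linarith [(sub_le_Df f _ _ i).trans_lt (hN₀ n m hn hnm)]⟩

/-- (Δ_N, D_f) is forward and backward complete: every forward
Cauchy sequence forward converges and every backward Cauchy sequence backward
converges to a point of the simplex. -/
theorem stmt_4 {N : ℕ} (f : ℝ → ℝ)
    (hfc : ContinuousOn f (Set.Icc 0 1))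
    (hfm : StrictMonoOn f (Set.Icc 0 1))
    (hf0 : f 0 = 0) (hf1 : f 1 = 1)
    (Pn : ℕ → Fin (N + 1) → ℝ) (hPn : ∀ n, memSimplex (Pn n)) :
    ((∀ ε > (0 : ℝ), ∃ N₀ : ℕ, ∀ n m : ℕ, N₀ ≤ n → n ≤ m → Df f (Pn n) (Pn m) < ε) →
      ∃ P : Fin (N + 1) → ℝ, memSimplex P ∧
        Tendsto (fun n => Df f P (Pn n)) atTop (𝓝 0)) ∧
    ((∀ ε > (0 : ℝ), ∃ N₀ : ℕ, ∀ n m : ℕ, N₀ ≤ n → n ≤ m → Df f (Pn m) (Pn n) < ε) →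
      ∃ P : Fin (N + 1) → ℝ, memSimplex P ∧
        Tendsto (fun n => Df f (Pn n) P) atTop (𝓝 0)) :=
  stmt_4_general f hfc Pn hPn
end

section
/- Uniform Finslerian approximation of D_f along C¹ curves: let f be continuously differentiable on (0,1) and γ : [a,b] → Δ°_N a C¹ curve into the interior of the simplex. Then for every ε > 0 there exists δ > 0 such that for all s, t ∈ [a,b] with 0 < t − s < δ, | D_f(γ(s),γ(t))/(t − s) − max_i (f ∘ γ_i)'(s) | ≤ ε, where γ_i denotes the i-th coordinate of γ. -/
/-- Membership in the interior Δ°_N of the probability simplex. -/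
def memInteriorSimplex {N : ℕ} (P : Fin (N + 1) → ℝ) : Prop :=
  (∀ i, P i ∈ Set.Ioo (0 : ℝ) 1) ∧ ∑ i, P i = 1

/-!
The vector of coordinates `u ↦ (f (γ u i))ᵢ` is a C¹ curve on the compact interval `[a, b]`, so its
derivative is uniformly continuous there, and the mean value theorem turns this into a uniform
first-order approximation of its increments. Taking the maximum over the coordinates preserves
the estimate, since the maximum of finitely many reals is 1-Lipschitz for the sup norm.
-/

open Set

theorem abs_ciSup_sub_ciSup_le {ι : Type*} [Finite ι] [Nonempty ι] {A B : ι → ℝ} {c : ℝ}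
    (h : ∀ i, |A i - B i| ≤ c) : |(⨆ i, A i) - ⨆ i, B i| ≤ c := by
  have sup_sub_le : ∀ A B : ι → ℝ, (∀ i, A i - B i ≤ c) → (⨆ i, A i) - ⨆ i, B i ≤ c := by
    intro A B hAB
    rw [sub_le_iff_le_add]
    exact ciSup_le fun i => by
      linarith [hAB i, le_ciSup (Finite.bddAbove_range B) i]
  exact abs_sub_le_iff.2 ⟨sup_sub_le A B fun i => (abs_le.1 (h i)).2,
    sup_sub_le B A fun i => by linarith [(abs_le.1 (h i)).1]⟩

theorem exists_pos_norm_sub_sub_smul_le {E : Type*} [NormedAddCommGroup E] [NormedSpace ℝ E]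
    {F F' : ℝ → E} {a b : ℝ} (hF : ∀ t ∈ Icc a b, HasDerivWithinAt F (F' t) (Icc a b) t)
    (hF' : ContinuousOn F' (Icc a b)) {ε : ℝ} (hε : 0 < ε) :
    ∃ δ > 0, ∀ s ∈ Icc a b, ∀ t ∈ Icc a b, s ≤ t → t - s < δ →
      ‖F t - F s - (t - s) • F' s‖ ≤ ε * (t - s) := by
  obtain ⟨δ, hδ, hF'δ⟩ :=
    Metric.uniformContinuousOn_iff.1 (isCompact_Icc.uniformContinuousOn_of_continuous hF') ε hε
  refine ⟨δ, hδ, fun s hs t ht hst htδ => ?_⟩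
  have hsub : Icc s t ⊆ Icc a b := Icc_subset_Icc hs.1 ht.2
  have hderiv : ∀ u ∈ Icc s t,
      HasDerivWithinAt (fun u => F u - u • F' s) (F' u - F' s) (Icc s t) u := fun u hu =>
    ((hF u (hsub hu)).mono hsub).sub ((hasDerivWithinAt_id u _).smul_const (F' s) |>.congr_deriv
      (one_smul ℝ _))
  have hbound : ∀ u ∈ Icc s t, ‖F' u - F' s‖ ≤ ε := fun u hu => by
    rw [← dist_eq_norm]
    refine (hF'δ u (hsub hu) s hs ?_).le
    rw [Real.dist_eq, abs_of_nonneg (sub_nonneg.2 hu.1)]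
    linarith [hu.2]
  have hmvt := (convex_Icc s t).norm_image_sub_le_of_norm_hasDerivWithin_le hderiv hbound
    (left_mem_Icc.2 hst) (right_mem_Icc.2 hst)
  calc ‖F t - F s - (t - s) • F' s‖ = ‖F t - t • F' s - (F s - s • F' s)‖ := by
        rw [sub_smul]; congr 1; abel
    _ ≤ ε * ‖t - s‖ := hmvt
    _ = ε * (t - s) := by rw [Real.norm_eq_abs, abs_of_nonneg (sub_nonneg.2 hst)]

theorem stmt_11_general {N : ℕ} (f f' : ℝ → ℝ)
    (hderiv : ∀ x ∈ Set.Ioo (0 : ℝ) 1, HasDerivAt f (f' x) x)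
    (hf'cont : ContinuousOn f' (Set.Ioo 0 1))
    (a b : ℝ)
    (γ γ' : ℝ → Fin (N + 1) → ℝ)
    (hγmem : ∀ t ∈ Set.Icc a b, memInteriorSimplex (γ t))
    (hγderiv : ∀ t ∈ Set.Icc a b, HasDerivWithinAt γ (γ' t) (Set.Icc a b) t)
    (hγ'cont : ContinuousOn γ' (Set.Icc a b))
    (ε : ℝ) (hε : 0 < ε) :
    ∃ δ > (0 : ℝ), ∀ s ∈ Set.Icc a b, ∀ t ∈ Set.Icc a b, 0 < t - s → t - s < δ →
      |Df f (γ s) (γ t) / (t - s) - ⨆ i, f' (γ s i) * γ' s i| ≤ ε := by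
  have hγIoo : ∀ t ∈ Icc a b, ∀ i, γ t i ∈ Ioo 0 1 := fun t ht => (hγmem t ht).1
  have hγcont : ContinuousOn γ (Icc a b) := fun t ht => (hγderiv t ht).continuousWithinAt
  have hΦ : ∀ t ∈ Icc a b, HasDerivWithinAt (fun u i => f (γ u i))
      (fun i => f' (γ t i) * γ' t i) (Icc a b) t := fun t ht =>
    hasDerivWithinAt_pi.2 fun i =>
      (hderiv _ (hγIoo t ht i)).comp_hasDerivWithinAt t (hasDerivWithinAt_pi.1 (hγderiv t ht) i)
  have hΦ' : ContinuousOn (fun t i => f' (γ t i) * γ' t i) (Icc a b) :=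
    continuousOn_pi.2 fun i =>
      (hf'cont.comp (continuousOn_apply i _ |>.comp hγcont (mapsTo_univ _ _))
        fun t ht => hγIoo t ht i).mul (continuousOn_apply i _ |>.comp hγ'cont (mapsTo_univ _ _))
  obtain ⟨δ, hδ, happrox⟩ := exists_pos_norm_sub_sub_smul_le hΦ hΦ' hε
  refine ⟨δ, hδ, fun s hs t ht hst htδ => ?_⟩
  have hdiv : Df f (γ s) (γ t) / (t - s) = ⨆ i, (f (γ t i) - f (γ s i)) / (t - s) := by
    simp only [Df, div_eq_mul_inv]
    exact Real.iSup_mul_of_nonneg (inv_nonneg.2 hst.le) _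
  rw [hdiv]
  refine abs_ciSup_sub_ciSup_le fun i => ?_
  rw [div_sub' hst.ne', abs_div, abs_of_pos hst, div_le_iff₀ hst]
  exact (norm_le_pi_norm _ i).trans (happrox s hs t ht (sub_pos.1 hst).le htδ)

/-- uniform Finslerian approximation of D_f along C¹ curves: if f
is C¹ on (0,1) (with derivative f') and γ : [a,b] → Δ°_N is a C¹ curve (with
derivative γ'), then for every ε > 0 there is δ > 0 such that for all
s,t ∈ [a,b] with 0 < t - s < δ,
| D_f(γ(s),γ(t))/(t-s) - max_i (f∘γ_i)'(s) | ≤ ε, where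
(f∘γ_i)'(s) = f'(γ_i(s))·γ_i'(s). -/
theorem stmt_11 {N : ℕ} (f f' : ℝ → ℝ)
    (hfc : ContinuousOn f (Set.Icc 0 1))
    (hfm : StrictMonoOn f (Set.Icc 0 1))
    (hf0 : f 0 = 0) (hf1 : f 1 = 1)
    (hderiv : ∀ x ∈ Set.Ioo (0 : ℝ) 1, HasDerivAt f (f' x) x)
    (hf'cont : ContinuousOn f' (Set.Ioo 0 1))
    (a b : ℝ) (hab : a < b)
    (γ γ' : ℝ → Fin (N + 1) → ℝ)
    (hγmem : ∀ t ∈ Set.Icc a b, memInteriorSimplex (γ t))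
    (hγderiv : ∀ t ∈ Set.Icc a b, HasDerivWithinAt γ (γ' t) (Set.Icc a b) t)
    (hγ'cont : ContinuousOn γ' (Set.Icc a b))
    (ε : ℝ) (hε : 0 < ε) :
    ∃ δ > (0 : ℝ), ∀ s ∈ Set.Icc a b, ∀ t ∈ Set.Icc a b, 0 < t - s → t - s < δ →
      |Df f (γ s) (γ t) / (t - s) - ⨆ i, f' (γ s i) * γ' s i| ≤ ε :=
  stmt_11_general f f' hderiv hf'cont a b γ γ' hγmem hγderiv hγ'cont ε hε
end

section
/- The quasidistance between endpoints is bounded by the Finsler length: let f be continuously differentiable on (0,1) and γ : [a,b] → Δ°_N a C¹ curve into the interior of the simplex. Then D_f(γ(a),γ(b)) ≤ ∫_a^b max_i f'(γ_i(τ))·γ_i'(τ) dτ. -/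
/-!
Each coordinate satisfies `f (γ b i) - f (γ a i) = ∫ f' (γ τ i) * γ' τ i` by the chain rule and
the fundamental theorem of calculus, and the integrand is pointwise at most the maximum over all
coordinates; taking the maximum over `i` of the left-hand sides gives `D_f (γ a) (γ b)`.
-/

open Set MeasureTheory

theorem ContinuousOn.ciSup_apply {ι X L : Type*} [Fintype ι] [Nonempty ι] [TopologicalSpace X]
    [ConditionallyCompleteLattice L] [TopologicalSpace L] [ContinuousSup L]
    {F : ι → X → L} {s : Set X} (hF : ∀ i, ContinuousOn (F i) s) :
    ContinuousOn (fun x => ⨆ i, F i x) s := by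
  simpa only [Finset.sup'_univ_eq_ciSup] using
    ContinuousOn.finset_sup'_apply Finset.univ_nonempty fun i _ => hF i

theorem intervalIntegral.integral_le_integral_ciSup {ι : Type*} [Fintype ι] [Nonempty ι]
    {F : ι → ℝ → ℝ} {a b : ℝ} (hab : a ≤ b) (hF : ∀ i, ContinuousOn (F i) (Icc a b)) (i : ι) :
    ∫ t in a..b, F i t ≤ ∫ t in a..b, ⨆ j, F j t :=
  integral_mono_on hab ((hF i).intervalIntegrable_of_Icc hab)
    ((ContinuousOn.ciSup_apply hF).intervalIntegrable_of_Icc hab)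
    fun t _ => le_ciSup (f := (F · t)) (Finite.bddAbove_range _) i

theorem sub_eq_integral_comp_mul_deriv {f f' c c' : ℝ → ℝ} {U : Set ℝ} {a b : ℝ} (hab : a ≤ b)
    (hf : ∀ x ∈ U, HasDerivAt f (f' x) x) (hf' : ContinuousOn f' U)
    (hc : ∀ t ∈ Icc a b, HasDerivWithinAt c (c' t) (Icc a b) t) (hc' : ContinuousOn c' (Icc a b))
    (hcU : MapsTo c (Icc a b) U) :
    f (c b) - f (c a) = ∫ t in a..b, f' (c t) * c' t := by
  have hcont : ContinuousOn c (Icc a b) := fun t ht => (hc t ht).continuousWithinAt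
  refine (intervalIntegral.integral_eq_sub_of_hasDerivAt_of_le hab
    (fun t ht => (hf _ (hcU ht)).continuousAt.comp_continuousWithinAt (hcont t ht))
    (fun t ht => ?_) (((hf'.comp hcont hcU).mul hc').intervalIntegrable_of_Icc hab)).symm
  have ht' : t ∈ Icc a b := Ioo_subset_Icc_self ht
  exact (hf _ (hcU ht')).comp t ((hc t ht').hasDerivAt (Icc_mem_nhds ht.1 ht.2))

theorem stmt_14_general {N : ℕ} (f f' : ℝ → ℝ)
    (hderiv : ∀ x ∈ Set.Ioo (0 : ℝ) 1, HasDerivAt f (f' x) x)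
    (hf'cont : ContinuousOn f' (Set.Ioo 0 1))
    (a b : ℝ) (hab : a ≤ b)
    (γ γ' : ℝ → Fin (N + 1) → ℝ)
    (hγmem : ∀ t ∈ Set.Icc a b, memInteriorSimplex (γ t))
    (hγderiv : ∀ t ∈ Set.Icc a b, HasDerivWithinAt γ (γ' t) (Set.Icc a b) t)
    (hγ'cont : ContinuousOn γ' (Set.Icc a b)) :
    Df f (γ a) (γ b) ≤ ∫ τ in a..b, ⨆ i, f' (γ τ i) * γ' τ i := by
  have hγ : ∀ i, ∀ t ∈ Icc a b, HasDerivWithinAt (γ · i) (γ' t i) (Icc a b) t :=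
    fun i t ht => hasDerivWithinAt_pi.mp (hγderiv t ht) i
  have hγ' : ∀ i, ContinuousOn (γ' · i) (Icc a b) :=
    fun i => (continuous_apply i).comp_continuousOn hγ'cont
  have hγU : ∀ i, MapsTo (γ · i) (Icc a b) (Ioo 0 1) := fun i t ht => (hγmem t ht).1 i
  have hF : ∀ i, ContinuousOn (fun t => f' (γ t i) * γ' t i) (Icc a b) := fun i =>
    (hf'cont.comp (fun t ht => (hγ i t ht).continuousWithinAt) (hγU i)).mul (hγ' i)
  refine ciSup_le fun i => ?_
  rw [sub_eq_integral_comp_mul_deriv hab hderiv hf'cont (hγ i) (hγ' i) (hγU i)]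
  exact intervalIntegral.integral_le_integral_ciSup hab hF i

/-- the quasidistance between the endpoints of a C¹ curve
γ : [a,b] → Δ°_N is bounded by its Finsler length:
D_f(γ(a),γ(b)) ≤ ∫_a^b max_i f'(γ_i(τ))·γ_i'(τ) dτ. -/
theorem stmt_14 {N : ℕ} (f f' : ℝ → ℝ)
    (hfc : ContinuousOn f (Set.Icc 0 1))
    (hfm : StrictMonoOn f (Set.Icc 0 1))
    (hf0 : f 0 = 0) (hf1 : f 1 = 1)
    (hderiv : ∀ x ∈ Set.Ioo (0 : ℝ) 1, HasDerivAt f (f' x) x)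
    (hf'cont : ContinuousOn f' (Set.Ioo 0 1))
    (a b : ℝ) (hab : a ≤ b)
    (γ γ' : ℝ → Fin (N + 1) → ℝ)
    (hγmem : ∀ t ∈ Set.Icc a b, memInteriorSimplex (γ t))
    (hγderiv : ∀ t ∈ Set.Icc a b, HasDerivWithinAt γ (γ' t) (Set.Icc a b) t)
    (hγ'cont : ContinuousOn γ' (Set.Icc a b)) :
    Df f (γ a) (γ b) ≤ ∫ τ in a..b, ⨆ i, f' (γ τ i) * γ' τ i :=
  stmt_14_general f f' hderiv hf'cont a b hab γ γ' hγmem hγderiv hγ'cont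
end

section
/- Monotonicity of the Finsler function under bistochastic maps: suppose f is continuously differentiable on (0,1), with f' positive and 1/f' concave on (0,1). Let S be an (N+1)×(N+1) bistochastic matrix (S_{ij} ≥ 0, all row sums and column sums equal 1), let P ∈ Δ°_N, and let v ∈ ℝ^{N+1} with ∑_i v_i = 0. Then max_i f'((SP)_i)·(Sv)_i ≤ max_i f'(p_i)·v_i. -/
/-!
Let `M = max_j f'(p_j) v_j`; it is nonnegative because some `v_j ≥ 0`. Then `v_j ≤ M / f'(p_j)`
for every `j`, and since each row of `S` is a probability vector, Jensen's inequality for the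
concave function `1 / f'` gives `(Sv)_i ≤ M ∑_j S_ij / f'(p_j) ≤ M / f'((SP)_i)`.
-/

open Finset Matrix

theorem zero_le_ciSup_mul_of_sum_nonneg {ι : Type*} [Fintype ι] [Nonempty ι] {w v : ι → ℝ}
    (hw : ∀ i, 0 ≤ w i) (hv : 0 ≤ ∑ i, v i) : 0 ≤ ⨆ i, w i * v i := by
  obtain ⟨i, -, hi⟩ := exists_le_of_sum_le (f := 0) (g := v) univ_nonempty (by simpa using hv)
  exact le_ciSup_of_le (Set.finite_range _).bddAbove i (mul_nonneg (hw i) hi)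

theorem ConcaveOn.sum_mul_le_mul_of_le_mul {ι : Type*} {s : Set ℝ} {g : ℝ → ℝ}
    (hg : ConcaveOn ℝ s g) {t : Finset ι} {w p v : ι → ℝ} (hw₀ : ∀ j ∈ t, 0 ≤ w j)
    (hw₁ : ∑ j ∈ t, w j = 1) (hp : ∀ j ∈ t, p j ∈ s) {M : ℝ} (hM : 0 ≤ M)
    (hv : ∀ j ∈ t, v j ≤ M * g (p j)) :
    ∑ j ∈ t, w j * v j ≤ M * g (∑ j ∈ t, w j * p j) :=
  calc ∑ j ∈ t, w j * v j ≤ ∑ j ∈ t, w j * (M * g (p j)) :=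
        sum_le_sum fun j hj => mul_le_mul_of_nonneg_left (hv j hj) (hw₀ j hj)
    _ = M * ∑ j ∈ t, w j • g (p j) := by
        rw [mul_sum]
        exact sum_congr rfl fun j _ => by rw [smul_eq_mul]; ring
    _ ≤ M * g (∑ j ∈ t, w j * p j) :=
        mul_le_mul_of_nonneg_left (hg.le_map_sum hw₀ hw₁ hp) hM

theorem mul_mulVec_le_of_forall_mul_le {m n : Type*} [Fintype n] {s : Set ℝ} {φ : ℝ → ℝ}
    (hφ : ∀ x ∈ s, 0 < φ x) (hconc : ConcaveOn ℝ s fun x => 1 / φ x)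
    {S : Matrix m n ℝ} (hS₀ : ∀ i j, 0 ≤ S i j) (hS₁ : ∀ i, ∑ j, S i j = 1)
    {P v : n → ℝ} (hP : ∀ j, P j ∈ s) {M : ℝ} (hM : 0 ≤ M) (hv : ∀ j, φ (P j) * v j ≤ M)
    (i : m) : φ ((S *ᵥ P) i) * (S *ᵥ v) i ≤ M := by
  have hq : (S *ᵥ P) i ∈ s :=
    hconc.1.sum_mem (fun j _ => hS₀ i j) (hS₁ i) fun j _ => hP j
  have hSv : (S *ᵥ v) i ≤ M * (1 / φ ((S *ᵥ P) i)) :=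
    hconc.sum_mul_le_mul_of_le_mul (fun j _ => hS₀ i j) (hS₁ i) (fun j _ => hP j) hM
      fun j _ => by rw [mul_one_div, le_div_iff₀ (hφ _ (hP j)), mul_comm]; exact hv j
  calc φ ((S *ᵥ P) i) * (S *ᵥ v) i ≤ φ ((S *ᵥ P) i) * (M * (1 / φ ((S *ᵥ P) i))) :=
        mul_le_mul_of_nonneg_left hSv (hφ _ hq).le
    _ = M := by field_simp [(hφ _ hq).ne']

theorem stmt_18_general {N : ℕ} (f' : ℝ → ℝ)
    (hf'pos : ∀ x ∈ Set.Ioo (0 : ℝ) 1, 0 < f' x)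
    (hconc : ConcaveOn ℝ (Set.Ioo (0 : ℝ) 1) (fun x => 1 / f' x))
    (S : Matrix (Fin (N + 1)) (Fin (N + 1)) ℝ)
    (hS0 : ∀ i j, 0 ≤ S i j)
    (hSrow : ∀ i, ∑ j, S i j = 1)
    (P : Fin (N + 1) → ℝ) (hP : memInteriorSimplex P)
    (v : Fin (N + 1) → ℝ) (hv : ∑ i, v i = 0) :
    (⨆ i, f' (S.mulVec P i) * S.mulVec v i) ≤ ⨆ i, f' (P i) * v i := by
  obtain ⟨hPmem, -⟩ := hP
  have hM : 0 ≤ ⨆ i, f' (P i) * v i :=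
    zero_le_ciSup_mul_of_sum_nonneg (fun j => (hf'pos _ (hPmem j)).le) hv.ge
  exact ciSup_le <| mul_mulVec_le_of_forall_mul_le hf'pos hconc hS0 hSrow hPmem hM
    fun j => le_ciSup (f := fun i => f' (P i) * v i) (Set.finite_range _).bddAbove j

/-- monotonicity of the Finsler function F(v) = max_i f'(p_i)·v_i
under bistochastic maps: if f is C¹ on (0,1) with f' positive and 1/f' concave
on (0,1), S is a bistochastic matrix, P ∈ Δ°_N and v is a tangent vector
(∑ v_i = 0), then max_i f'((SP)_i)·(Sv)_i ≤ max_i f'(p_i)·v_i. -/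
theorem stmt_18 {N : ℕ} (f f' : ℝ → ℝ)
    (hderiv : ∀ x ∈ Set.Ioo (0 : ℝ) 1, HasDerivAt f (f' x) x)
    (hf'cont : ContinuousOn f' (Set.Ioo 0 1))
    (hf'pos : ∀ x ∈ Set.Ioo (0 : ℝ) 1, 0 < f' x)
    (hconc : ConcaveOn ℝ (Set.Ioo (0 : ℝ) 1) (fun x => 1 / f' x))
    (S : Matrix (Fin (N + 1)) (Fin (N + 1)) ℝ)
    (hS0 : ∀ i j, 0 ≤ S i j)
    (hSrow : ∀ i, ∑ j, S i j = 1)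
    (hScol : ∀ j, ∑ i, S i j = 1)
    (P : Fin (N + 1) → ℝ) (hP : memInteriorSimplex P)
    (v : Fin (N + 1) → ℝ) (hv : ∑ i, v i = 0) :
    (⨆ i, f' (S.mulVec P i) * S.mulVec v i) ≤ ⨆ i, f' (P i) * v i :=
  stmt_18_general f' hf'pos hconc S hS0 hSrow P hP v hv
end
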